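/- arXiv:2406.14817 — 2 statements merged into one kernel-verified Lean document; each statement's English description precedes it below -/
import Mathlib

section
/- If g : ℝ² → ℝ is linear, g(x) = ω·x for a fixed nonzero vector ω ∈ ℝ², and f is a polynomial of degree ≤ k, then there exists a polynomial vector field p of degree ≤ k with div p + i ω·p = f. -/
/-!
Writing `p = c q` with `c = -iω/|ω|²`, so that `iω · c = 1`, turns the Levin equation into
`q + (c · ∇) q = f`. The constant-coefficient operator `c · ∇` lowers the total degree, so
`1 + c · ∇` is invertible on polynomials of degree `≤ k`: by induction on `k`,
`q = f - q'` where `q'` solves the equation with right-hand side `(c · ∇) f` of degree `≤ k - 1`.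
-/

open MvPolynomial

namespace MvPolynomial

variable {σ R : Type*}

theorem totalDegree_pderiv_le [CommSemiring R] (i : σ) (f : MvPolynomial σ R) :
    (pderiv i f).totalDegree ≤ f.totalDegree - 1 := by
  classical
  conv_lhs => rw [f.as_sum, map_sum]
  refine totalDegree_finsetSum_le fun d hd => ?_
  rw [pderiv_monomial]
  by_cases hdi : d i = 0
  · simp [hdi]
  have hsingle : Finsupp.single i 1 ≤ d :=
    Finsupp.single_le_iff.mpr (Nat.one_le_iff_ne_zero.mpr hdi)
  have hdeg : (d - Finsupp.single i 1).degree + 1 = d.degree := by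
    nth_rewrite 2 [← Finsupp.degree_single i 1]
    rw [← map_add, tsub_add_cancel_of_le hsingle]
  have hd_le := le_totalDegree hd
  refine (totalDegree_monomial_le _ _).trans ?_
  simp only [Finsupp.sum, Finsupp.degree_apply, Function.id_def] at *
  omega

theorem pderiv_eq_zero_of_totalDegree_eq_zero [CommSemiring R] {f : MvPolynomial σ R}
    (hf : f.totalDegree = 0) (i : σ) : pderiv i f = 0 := by
  rw [totalDegree_eq_zero_iff_eq_C.mp hf, pderiv_C]

theorem exists_totalDegree_le_add_sum_smul_pderiv_eq [Fintype σ] [CommRing R] (v : σ → R)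
    {n : ℕ} {f : MvPolynomial σ R} (hf : f.totalDegree ≤ n) :
    ∃ q : MvPolynomial σ R, q.totalDegree ≤ n ∧ q + ∑ i, v i • pderiv i q = f := by
  induction n generalizing f with
  | zero =>
    refine ⟨f, hf, ?_⟩
    simp [pderiv_eq_zero_of_totalDegree_eq_zero (Nat.le_zero.mp hf)]
  | succ n ih =>
    have hDf : (∑ i, v i • pderiv i f).totalDegree ≤ n :=
      totalDegree_finsetSum_le fun i _ =>
        ((totalDegree_smul_le _ _).trans (totalDegree_pderiv_le i f)).trans (by omega)
    obtain ⟨q, hq, hqf⟩ := ih hDf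
    refine ⟨f - q, (totalDegree_sub _ _).trans (max_le hf (hq.trans n.le_succ)), ?_⟩
    simp only [map_sub, smul_sub, Finset.sum_sub_distrib]
    linear_combination -hqf

end MvPolynomial

/-- For a linear phase `g(x) = ω·x` with `ω ∈ ℝ²` nonzero, and any polynomial
`f` of degree ≤ k, there exists a polynomial vector field `p = (p₁, p₂)` of degree ≤ k with
`div p + i ω·p = f`. -/
theorem levin_pde_polynomial_solvability
    (ω : Fin 2 → ℝ) (hω : ω ≠ 0) (k : ℕ)
    (f : MvPolynomial (Fin 2) ℂ) (hf : f.totalDegree ≤ k) :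
    ∃ p₁ p₂ : MvPolynomial (Fin 2) ℂ,
      p₁.totalDegree ≤ k ∧ p₂.totalDegree ≤ k ∧
      pderiv 0 p₁ + pderiv 1 p₂ +
        C (Complex.I * (ω 0 : ℂ)) * p₁ + C (Complex.I * (ω 1 : ℂ)) * p₂ = f := by
  have hnorm : (ω 0 : ℂ) ^ 2 + (ω 1 : ℂ) ^ 2 ≠ 0 := by
    norm_cast
    contrapose! hω
    ext i
    fin_cases i <;> simp <;> nlinarith [sq_nonneg (ω 0), sq_nonneg (ω 1)]
  let c : Fin 2 → ℂ := fun j => -Complex.I * ω j / ((ω 0 : ℂ) ^ 2 + (ω 1 : ℂ) ^ 2)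
  have hc : C (Complex.I * ω 0) * C (c 0) + C (Complex.I * ω 1) * C (c 1) =
      (1 : MvPolynomial (Fin 2) ℂ) := by
    rw [← map_mul, ← map_mul, ← map_add, ← map_one C]
    congr 1
    simp only [c]
    field_simp
    linear_combination (-((ω 0 : ℂ) ^ 2 + (ω 1 : ℂ) ^ 2)) * Complex.I_sq
  obtain ⟨q, hq, hqf⟩ := exists_totalDegree_le_add_sum_smul_pderiv_eq c hf
  have hdeg (j : Fin 2) : (C (c j) * q).totalDegree ≤ k := by
    simpa [smul_eq_C_mul] using (totalDegree_smul_le (c j) q).trans hq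
  refine ⟨C (c 0) * q, C (c 1) * q, hdeg 0, hdeg 1, ?_⟩
  simp only [Fin.sum_univ_two, smul_eq_C_mul] at hqf
  rw [pderiv_C_mul, pderiv_C_mul, ← hqf]
  linear_combination q * hc
end

section
/- Let g(x,y) = x² + y² (so that the origin is a stationary point of g) and f ≡ 1. Then the vector field p(x,y) = c(x,y)·(x,y) with scalar c solving the ODE r c'(r) + 2c(r) + 2 i r² c(r) = 1 in r² = x²+y², which has a solution c smooth at 0, satisfies div p + i∇g·p = 1 on ℝ². Hence the Levin PDE is solvable by a smooth vector field even in the presence of a stationary point of g. -/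
/-- The scalar function `c(s) = (1 − e^{−is})/(2is)`, extended by `c(0) = 1/2`,
solving the reduced ODE `2 s c'(s) + 2 c(s) + 2 i s c(s) = 1`. -/
noncomputable def levinScalar (s : ℝ) : ℂ :=
  if s = 0 then 1 / 2
  else (1 - Complex.exp (-Complex.I * (s : ℂ))) / (2 * Complex.I * (s : ℂ))

/-- The entire extension of `levinScalar`. -/
noncomputable def levinF (w : ℂ) : ℂ :=
  (2 * Complex.I)⁻¹ * dslope (fun w : ℂ => 1 - Complex.exp (-Complex.I * w)) 0 w

lemma levinG_diff : Differentiable ℂ (fun w : ℂ => 1 - Complex.exp (-Complex.I * w)) := by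
  fun_prop

lemma levinF_diff : Differentiable ℂ levinF := by
  have h := (Complex.differentiableOn_dslope (s := Set.univ) (c := (0:ℂ))
      (Filter.univ_mem)).mpr levinG_diff.differentiableOn
  have : Differentiable ℂ (dslope (fun w : ℂ => 1 - Complex.exp (-Complex.I * w)) 0) :=
    fun x => (h x (Set.mem_univ x)).differentiableAt (Filter.univ_mem)
  exact (differentiable_const _).mul this

lemma levinF_zero : levinF 0 = 1 / 2 := by
  have hd : deriv (fun w : ℂ => 1 - Complex.exp (-Complex.I * w)) 0 = Complex.I := by
    have : ∀ w : ℂ, HasDerivAt (fun w : ℂ => 1 - Complex.exp (-Complex.I * w))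
        (Complex.I * Complex.exp (-Complex.I * w)) w := by
      intro w
      have h1 : HasDerivAt (fun w : ℂ => -Complex.I * w) (-Complex.I) w := by
        simpa using (hasDerivAt_id w).const_mul (-Complex.I)
      have h2 := (Complex.hasDerivAt_exp (-Complex.I * w)).comp w h1
      have := (h2.const_sub 1)
      exact this.congr_deriv (by ring)
    rw [(this 0).deriv]; simp
  rw [levinF, dslope_same, hd]
  field_simp

lemma levinF_ne_zero (w : ℂ) (hw : w ≠ 0) :
    levinF w = (1 - Complex.exp (-Complex.I * w)) / (2 * Complex.I * w) := by
  rw [levinF, dslope_of_ne _ hw]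
  simp only [slope, vsub_eq_sub, sub_zero, smul_eq_mul]
  have h2i : (2 : ℂ) * Complex.I ≠ 0 := by simp [Complex.I_ne_zero]
  field_simp
  simp

lemma levinScalar_eq (s : ℝ) : levinScalar s = levinF (s : ℂ) := by
  unfold levinScalar
  by_cases hs : s = 0
  · simp [hs, levinF_zero]
  · rw [if_neg hs, levinF_ne_zero _ (by exact_mod_cast hs)]

lemma levinF_mul (w : ℂ) : levinF w * (2 * Complex.I * w) = 1 - Complex.exp (-Complex.I * w) := by
  by_cases hw : w = 0
  · simp [hw]
  · rw [levinF_ne_zero w hw]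
    field_simp

lemma levinF_deriv (w : ℂ) :
    2 * w * deriv levinF w + 2 * levinF w = Complex.exp (-Complex.I * w) := by
  have hL : ∀ u : ℂ, HasDerivAt (fun v => levinF v * (2 * Complex.I * v))
      (deriv levinF u * (2 * Complex.I * u) + levinF u * (2 * Complex.I)) u := by
    intro u
    have h1 := (levinF_diff u).hasDerivAt
    have h2 : HasDerivAt (fun v : ℂ => 2 * Complex.I * v) (2 * Complex.I) u := by
      simpa using (hasDerivAt_id u).const_mul (2 * Complex.I)
    exact h1.mul h2
  have hR : HasDerivAt (fun v : ℂ => 1 - Complex.exp (-Complex.I * v))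
      (Complex.I * Complex.exp (-Complex.I * w)) w := by
    have h1 : HasDerivAt (fun v : ℂ => -Complex.I * v) (-Complex.I) w := by
      simpa using (hasDerivAt_id w).const_mul (-Complex.I)
    have h2 := (Complex.hasDerivAt_exp (-Complex.I * w)).comp w h1
    have := h2.const_sub 1
    exact this.congr_deriv (by ring)
  have heq : (fun v => levinF v * (2 * Complex.I * v)) =
      (fun v : ℂ => 1 - Complex.exp (-Complex.I * v)) := funext levinF_mul
  have := hL w
  rw [heq] at this
  have hderiv : deriv levinF w * (2 * Complex.I * w) + levinF w * (2 * Complex.I)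
      = Complex.I * Complex.exp (-Complex.I * w) := this.unique hR
  have hI : Complex.I ≠ 0 := Complex.I_ne_zero
  have : Complex.I * (2 * w * deriv levinF w + 2 * levinF w)
      = Complex.I * Complex.exp (-Complex.I * w) := by rw [← hderiv]; ring
  exact mul_left_cancel₀ hI this

lemma levinF_ode (w : ℂ) :
    2 * w * deriv levinF w + 2 * levinF w + 2 * Complex.I * w * levinF w = 1 := by
  have h1 := levinF_deriv w
  have h2 := levinF_mul w
  rw [h1, show 2 * Complex.I * w * levinF w = levinF w * (2 * Complex.I * w) by ring, h2]
  ring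

lemma levinF_contDiffR : ContDiff ℝ (⊤ : ℕ∞) levinF :=
  (levinF_diff.contDiff).restrict_scalars ℝ

/-- for `g(x,y) = x² + y²` (with a stationary point at the origin) and
`f ≡ 1`, the vector field `p(x,y) = c(x² + y²)·(x,y)` with `c = levinScalar` is a smooth
solution of the Levin PDE `div p + i∇g·p = 1` on all of `ℝ²`; smooth solvability is not
obstructed by the stationary point. -/
theorem levin_pde_solvable_at_stationary_point :
    ContDiff ℝ (⊤ : ℕ∞) (fun z : ℝ × ℝ => levinScalar (z.1 ^ 2 + z.2 ^ 2) * (z.1 : ℂ)) ∧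
    ContDiff ℝ (⊤ : ℕ∞) (fun z : ℝ × ℝ => levinScalar (z.1 ^ 2 + z.2 ^ 2) * (z.2 : ℂ)) ∧
    ∀ z : ℝ × ℝ,
      fderiv ℝ (fun y : ℝ × ℝ => levinScalar (y.1 ^ 2 + y.2 ^ 2) * (y.1 : ℂ)) z (1, 0) +
        fderiv ℝ (fun y : ℝ × ℝ => levinScalar (y.1 ^ 2 + y.2 ^ 2) * (y.2 : ℂ)) z (0, 1) +
        Complex.I * ((2 * z.1 : ℝ) * (levinScalar (z.1 ^ 2 + z.2 ^ 2) * (z.1 : ℂ)) +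
          (2 * z.2 : ℝ) * (levinScalar (z.1 ^ 2 + z.2 ^ 2) * (z.2 : ℂ))) = 1 := by
  have hre1 : (fun y : ℝ × ℝ => levinScalar (y.1 ^ 2 + y.2 ^ 2) * (y.1 : ℂ)) =
      fun y : ℝ × ℝ => levinF ((y.1 ^ 2 + y.2 ^ 2 : ℝ) : ℂ) * (y.1 : ℂ) := by
    funext y; rw [levinScalar_eq]
  have hre2 : (fun y : ℝ × ℝ => levinScalar (y.1 ^ 2 + y.2 ^ 2) * (y.2 : ℂ)) =
      fun y : ℝ × ℝ => levinF ((y.1 ^ 2 + y.2 ^ 2 : ℝ) : ℂ) * (y.2 : ℂ) := by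
    funext y; rw [levinScalar_eq]
  have hsc : ContDiff ℝ (⊤ : ℕ∞) (fun z : ℝ × ℝ => ((z.1 ^ 2 + z.2 ^ 2 : ℝ) : ℂ)) :=
    Complex.ofRealCLM.contDiff.comp ((contDiff_fst.pow 2).add (contDiff_snd.pow 2))
  have hFc : ContDiff ℝ (⊤ : ℕ∞) (fun z : ℝ × ℝ => levinF ((z.1 ^ 2 + z.2 ^ 2 : ℝ) : ℂ)) :=
    levinF_contDiffR.comp hsc
  have hx : ContDiff ℝ (⊤ : ℕ∞) (fun z : ℝ × ℝ => (z.1 : ℂ)) :=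
    Complex.ofRealCLM.contDiff.comp contDiff_fst
  have hy : ContDiff ℝ (⊤ : ℕ∞) (fun z : ℝ × ℝ => (z.2 : ℂ)) :=
    Complex.ofRealCLM.contDiff.comp contDiff_snd
  refine ⟨?_, ?_, ?_⟩
  · rw [hre1]; exact hFc.mul hx
  · rw [hre2]; exact hFc.mul hy
  · intro z
    have h1 := (hasDerivAt_pow 2 z.1).comp_hasFDerivAt z (hasFDerivAt_fst : HasFDerivAt Prod.fst (ContinuousLinearMap.fst ℝ ℝ ℝ) z)
    have h2 := (hasDerivAt_pow 2 z.2).comp_hasFDerivAt z (hasFDerivAt_snd : HasFDerivAt Prod.snd (ContinuousLinearMap.snd ℝ ℝ ℝ) z)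
    have hsL : HasFDerivAt (fun y : ℝ × ℝ => y.1 ^ 2 + y.2 ^ 2)
        (((2 : ℕ) * z.1 ^ (2 - 1) : ℝ) • ContinuousLinearMap.fst ℝ ℝ ℝ +
          ((2 : ℕ) * z.2 ^ (2 - 1) : ℝ) • ContinuousLinearMap.snd ℝ ℝ ℝ) z := h1.add h2
    set s0 : ℝ := z.1 ^ 2 + z.2 ^ 2 with hs0
    have hφ : HasDerivAt (fun t : ℝ => levinF (t : ℂ)) (deriv levinF (s0 : ℂ)) s0 :=
      (levinF_diff ((s0 : ℝ) : ℂ)).hasDerivAt.comp_ofReal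
    have hφF := hφ.hasFDerivAt
    have hcomp : HasFDerivAt (fun y : ℝ × ℝ => levinF ((y.1 ^ 2 + y.2 ^ 2 : ℝ) : ℂ))
        (((1 : ℝ →L[ℝ] ℝ).smulRight (deriv levinF (s0 : ℂ))).comp
          (((2 : ℕ) * z.1 ^ (2 - 1) : ℝ) • ContinuousLinearMap.fst ℝ ℝ ℝ +
            ((2 : ℕ) * z.2 ^ (2 - 1) : ℝ) • ContinuousLinearMap.snd ℝ ℝ ℝ)) z :=
      by have := HasFDerivAt.comp z hφF hsL; exact this
    have hxd : HasFDerivAt (fun y : ℝ × ℝ => (y.1 : ℂ))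
        (Complex.ofRealCLM.comp (ContinuousLinearMap.fst ℝ ℝ ℝ)) z :=
      Complex.ofRealCLM.hasFDerivAt.comp z (hasFDerivAt_fst : HasFDerivAt Prod.fst (ContinuousLinearMap.fst ℝ ℝ ℝ) z)
    have hyd : HasFDerivAt (fun y : ℝ × ℝ => (y.2 : ℂ))
        (Complex.ofRealCLM.comp (ContinuousLinearMap.snd ℝ ℝ ℝ)) z :=
      Complex.ofRealCLM.hasFDerivAt.comp z (hasFDerivAt_snd : HasFDerivAt Prod.snd (ContinuousLinearMap.snd ℝ ℝ ℝ) z)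
    have hu : HasFDerivAt
        (fun y : ℝ × ℝ => levinF ((y.1 ^ 2 + y.2 ^ 2 : ℝ) : ℂ) * (y.1 : ℂ)) _ z :=
      hcomp.mul hxd
    have hv : HasFDerivAt
        (fun y : ℝ × ℝ => levinF ((y.1 ^ 2 + y.2 ^ 2 : ℝ) : ℂ) * (y.2 : ℂ)) _ z :=
      hcomp.mul hyd
    rw [hre1, hre2, hu.fderiv, hv.fderiv, levinScalar_eq]
    simp only [ContinuousLinearMap.add_apply, ContinuousLinearMap.smul_apply,
      ContinuousLinearMap.comp_apply, ContinuousLinearMap.smulRight_apply,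
      ContinuousLinearMap.one_apply, ContinuousLinearMap.coe_fst',
      ContinuousLinearMap.coe_snd', Complex.ofRealCLM_apply, Complex.real_smul,
      smul_eq_mul, pow_one, Nat.cast_ofNat]
    have hode := levinF_ode ((s0 : ℝ) : ℂ)
    push_cast [hs0] at hode ⊢
    ring_nf
    ring_nf at hode
    linear_combination hode
end
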